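/- Under the hypotheses on the Laurent series x_1(t), …, x_m(t), let (k_1, …, k_m) ∈ ℤ_{≥0}^m and set N = Σ_{i=1}^m a_i k_i. Then there exist unique complex numbers ρ_J, indexed by the elements J = (J_1, …, J_m) of B(A_m) with Σ_{i=1}^m a_i J_i ≤ N, such that x_1(t)^{k_1} ⋯ x_m(t)^{k_m} = Σ_J ρ_J · x_1(t)^{J_1} ⋯ x_m(t)^{J_m} in ℂ((t)); moreover ρ_{J*} = 1 for the unique J* ∈ B(A_m) with Σ_{i=1}^m a_i J*_i = N, and every ρ_J belongs to ℤ[λ]. -/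

import Mathlib

/-!
The series `x j` has order `-a j`, so the monomial `x^K = ∏ x j ^ K j` has order `-Σ a j K j`.
This weight is injective on `B(A_m)`: reading it modulo `d_{i-1}` from `i = m` downwards recovers
the entries `J i < d_{i-1}/d_i` one at a time, as digits in a mixed radix. Monomials of distinct
orders are linearly independent, which gives uniqueness.

For existence, if `K ∉ B(A_m)` then `K i ≥ d_{i-1}/d_i` for some `i`, and `F_i` rewrites `x^K` as
a monomial of the same weight whose exponent is colexicographically smaller, plus `ℤ[λ]`-multiples
of monomials of smaller weight. By well-founded induction, `x^K` is a basis monomial `x^{J⋆}` of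
the same weight plus a `ℤ[λ]`-combination of basis monomials of smaller weight.
-/

open Finset

/-- `dseq a i` is `gcd(a 1, …, a i)`. -/
def dseq (a : ℕ → ℕ) (i : ℕ) : ℕ := Finset.gcd (Finset.Icc 1 i) a

/-- `BAm m a ℓ` says that the tuple `(ℓ 1, …, ℓ m)` belongs to `B(A_m)`. -/
def BAm (m : ℕ) (a : ℕ → ℕ) (ℓ : ℕ → ℕ) : Prop :=
  (∀ j, (j < 1 ∨ m < j) → ℓ j = 0) ∧
    ∀ i, 2 ≤ i → i ≤ m → ℓ i < dseq a (i - 1) / dseq a i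

/-- `Telescopic m a` says that `(a 1, …, a m)` is a telescopic sequence. -/
def Telescopic (m : ℕ) (a : ℕ → ℕ) : Prop :=
  2 ≤ m ∧ (∀ i, 1 ≤ i → i ≤ m → 2 ≤ a i) ∧ dseq a m = 1 ∧
    ∀ i, 2 ≤ i → i ≤ m → ∃ ℓ : ℕ → ℕ, (∀ j, (j < 1 ∨ i ≤ j) → ℓ j = 0) ∧
      a i * dseq a (i - 1) = dseq a i * ∑ j ∈ Finset.Icc 1 m, ℓ j * a j


lemma dseq_succ (a : ℕ → ℕ) (i : ℕ) : dseq a (i + 1) = (dseq a i).gcd (a (i + 1)) := by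
  rw [dseq, ← insert_Icc_right_eq_Icc_add_one (by omega), gcd_insert, Nat.gcd_comm]
  rfl

lemma dseq_dvd {a : ℕ → ℕ} {i j : ℕ} (hj : j ∈ Icc 1 i) : dseq a i ∣ a j :=
  Finset.gcd_dvd hj

lemma dseq_pos {a : ℕ → ℕ} (ha : 0 < a 1) {i : ℕ} (hi : 1 ≤ i) : 0 < dseq a i :=
  Nat.pos_of_dvd_of_pos (dseq_dvd (mem_Icc.2 ⟨le_rfl, hi⟩)) ha

lemma dseq_dvd_dseq_pred (a : ℕ → ℕ) {i : ℕ} (hi : 1 ≤ i) : dseq a i ∣ dseq a (i - 1) := by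
  obtain ⟨i, rfl⟩ := Nat.exists_eq_add_of_le' hi
  simpa [dseq_succ] using Nat.gcd_dvd_left _ _

lemma mul_dseq_pred_eq {a : ℕ → ℕ} {i : ℕ} (hi : 1 ≤ i) :
    a i * dseq a (i - 1) = dseq a i * (a i * (dseq a (i - 1) / dseq a i)) := by
  rw [Nat.mul_left_comm, Nat.mul_div_cancel' (dseq_dvd_dseq_pred a hi)]

lemma one_le_dseq_pred_div {a : ℕ → ℕ} (ha : 0 < a 1) {i : ℕ} (hi : 2 ≤ i) :
    1 ≤ dseq a (i - 1) / dseq a i :=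
  Nat.div_pos (Nat.le_of_dvd (dseq_pos ha (by omega)) (dseq_dvd_dseq_pred a (by omega)))
    (dseq_pos ha (by omega))

lemma eq_of_add_mul_eq_add_mul {D c s s' u u' : ℕ} (hD : 0 < D) (hs : D ∣ s) (hs' : D ∣ s')
    (hu : u < D / D.gcd c) (hu' : u' < D / D.gcd c) (h : s + c * u = s' + c * u') : u = u' := by
  have hss' : s ≡ s' [MOD D] :=
    (Nat.modEq_zero_iff_dvd.2 hs).trans (Nat.modEq_zero_iff_dvd.2 hs').symm
  exact ((hss'.add_left_cancel (h ▸ rfl)).cancel_left_div_gcd hD).eq_of_lt_of_lt hu hu'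

def weight (m : ℕ) (a K : ℕ → ℕ) : ℕ := ∑ j ∈ Icc 1 m, a j * K j

lemma dseq_dvd_weight (i : ℕ) (a K : ℕ → ℕ) : dseq a i ∣ weight i a K :=
  dvd_sum fun _ hj => (dseq_dvd hj).mul_right _

lemma weight_add (m : ℕ) (a K L : ℕ → ℕ) : weight m a (K + L) = weight m a K + weight m a L := by
  simp [weight, Nat.mul_add, sum_add_distrib]

lemma weight_single (a : ℕ → ℕ) {m i : ℕ} (hi : i ∈ Icc 1 m) (c : ℕ) :
    weight m a (Pi.single i c) = a i * c := by
  simp [weight, Pi.single_apply, hi]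

namespace BAm

variable {m : ℕ} {a J J' : ℕ → ℕ}

lemma eq_on_Icc_of_weight_eq (ha : 0 < a 1) (hJ : BAm m a J) (hJ' : BAm m a J') :
    ∀ i ≤ m, weight i a J = weight i a J' → ∀ j ∈ Icc 1 i, J j = J' j
  | 0, _, _ => by simp
  | i + 1, hi, h => by
    rw [weight, weight, sum_Icc_succ_top (by omega), sum_Icc_succ_top (by omega)] at h
    have hlast : J (i + 1) = J' (i + 1) := by
      rcases Nat.eq_zero_or_pos i with rfl | hi0
      · simpa [ha.ne'] using h
      · have hbound := fun {L} (hL : BAm m a L) => (dseq_succ a i) ▸ hL.2 (i + 1) (by omega) hi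
        exact eq_of_add_mul_eq_add_mul (dseq_pos ha hi0) (dseq_dvd_weight i a J)
          (dseq_dvd_weight i a J') (hbound hJ) (hbound hJ') h
    have hrest := eq_on_Icc_of_weight_eq ha hJ hJ' i (by omega)
      (by rw [hlast] at h; exact Nat.add_right_cancel h)
    intro j hj
    rcases eq_or_ne j (i + 1) with rfl | hj'
    · exact hlast
    · exact hrest j (by simp at hj ⊢; omega)

lemma eq_of_weight_eq (ha : 0 < a 1) (hJ : BAm m a J) (hJ' : BAm m a J')
    (h : weight m a J = weight m a J') : J = J' := by
  funext j
  by_cases hj : j ∈ Icc 1 m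
  · exact eq_on_Icc_of_weight_eq ha hJ hJ' m le_rfl h j hj
  · have hj' : j < 1 ∨ m < j := by simp at hj; omega
    rw [hJ.1 j hj', hJ'.1 j hj']

end BAm

namespace HahnSeries

instance smulCommClass_self {Γ R : Type*} [PartialOrder Γ] [AddCommMonoid Γ]
    [IsOrderedCancelAddMonoid Γ] [CommSemiring R] :
    SMulCommClass R (HahnSeries Γ R) (HahnSeries Γ R) where
  smul_comm r x y := by simp_rw [smul_eq_mul, ← C_mul_eq_smul, mul_left_comm]

variable {Γ R ι : Type*} [LinearOrder Γ]

lemma orderTop_eq_of_coeff_ne_zero [Zero R] {x : HahnSeries Γ R} {g : Γ}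
    (hlt : ∀ g' < g, x.coeff g' = 0) (hg : x.coeff g ≠ 0) : x.orderTop = g :=
  orderTop_eq_of_le hg fun g' hg' => not_lt.1 fun h => hg' (hlt g' h)

lemma orderTop_prod_pow [AddCancelCommMonoid Γ] [IsOrderedCancelAddMonoid Γ] [CommRing R]
    [IsDomain R] (s : Finset ι) (x : ι → HahnSeries Γ R) (K : ι → ℕ) :
    (∏ i ∈ s, x i ^ K i).orderTop = ∑ i ∈ s, K i • (x i).orderTop := by
  induction s using Finset.cons_induction with
  | empty => simp
  | cons i s hi ih =>
    have hpow := (addVal Γ R).map_pow (x i) (K i)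
    rw [addVal_apply, addVal_apply] at hpow
    rw [prod_cons, sum_cons, orderTop_mul, hpow, ih]

/-- In a vanishing combination, the term of least order could not be cancelled. -/
theorem linearIndepOn_of_injOn_orderTop [Ring R] [NoZeroDivisors R]
    {v : ι → HahnSeries Γ R} {s : Set ι} (hv : ∀ i ∈ s, v i ≠ 0)
    (hinj : s.InjOn fun i => (v i).orderTop) : LinearIndepOn R v s := by
  classical
  rw [linearIndepOn_iff']
  intro t g hts hsum
  by_contra! hne
  obtain ⟨i₀, hi₀, hmin⟩ := (t.filter (g · ≠ 0)).exists_min_image (fun i => (v i).orderTop)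
    (by obtain ⟨i, hi, hgi⟩ := hne; exact ⟨i, mem_filter.2 ⟨hi, hgi⟩⟩)
  rw [mem_filter] at hi₀
  obtain ⟨o, ho⟩ := WithTop.ne_top_iff_exists.1 (orderTop_ne_top.2 (hv i₀ (hts hi₀.1)))
  have hcoeff : (∑ i ∈ t, g i • v i).coeff o = g i₀ * (v i₀).coeff o := by
    rw [coeff_sum, sum_eq_single i₀ _ (fun h => absurd hi₀.1 h)]
    · rfl
    intro i hi hii₀
    by_cases hgi : g i = 0
    · simp [hgi]
    have hlt : (v i₀).orderTop < (v i).orderTop :=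
      (hmin i (mem_filter.2 ⟨hi, hgi⟩)).lt_of_ne fun h => hii₀ (hinj (hts hi) (hts hi₀.1) h.symm)
    rw [coeff_smul, coeff_eq_zero_of_lt_orderTop (ho ▸ hlt), smul_zero]
  rw [hsum, coeff_zero] at hcoeff
  exact mul_ne_zero hi₀.2 (coeff_orderTop_ne ho.symm) hcoeff.symm

end HahnSeries

lemma LinearIndepOn.eq_of_sum_smul_eq {R M ι : Type*} [Semiring R] [AddCommMonoid M] [Module R M]
    {v : ι → M} {T : Finset ι} (hv : LinearIndepOn R v ↑T) {f g : ι → R}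
    (hf : ∀ i ∉ T, f i = 0) (hg : ∀ i ∉ T, g i = 0)
    (h : ∑ i ∈ T, f i • v i = ∑ i ∈ T, g i • v i) : f = g := by
  funext i
  by_cases hi : i ∈ T
  · exact linearIndepOn_finset_iffₛ.1 hv f g h i hi
  · rw [hf i hi, hg i hi]

lemma exists_eq_sum_smul_of_sub_mem_span {𝕜 M ι : Type*} [Field 𝕜] [AddCommGroup M] [Module 𝕜 M]
    {R : Subring 𝕜} {v : ι → M} {s : Set ι} {T : Finset ι} {i₀ : ι} {y : M}
    (hsT : s ⊆ T) (hi₀ : i₀ ∈ T) (hi₀s : i₀ ∉ s) (hy : y - v i₀ ∈ Submodule.span R (v '' s)) :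
    ∃ ρ : ι → 𝕜, (∀ i ∉ T, ρ i = 0) ∧ y = ∑ i ∈ T, ρ i • v i ∧ ρ i₀ = 1 ∧ ∀ i, ρ i ∈ R := by
  classical
  obtain ⟨l, hl, hly⟩ := (Finsupp.mem_span_image_iff_linearCombination R).1 hy
  rw [Finsupp.linearCombination_apply_of_mem_supported R (Finsupp.supported_mono hsT hl)] at hly
  have hl0 : ∀ i ∉ s, l i = 0 := fun i hi => Finsupp.notMem_support_iff.1 fun h => hi (hl h)
  refine ⟨fun i => l i + (Pi.single i₀ 1 : ι → 𝕜) i, fun i hi => ?_, ?_, ?_, fun i => ?_⟩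
  · simp [hl0 i fun h => hi (hsT h), ne_of_mem_of_not_mem hi₀ hi |>.symm]
  · simp_rw [add_smul, sum_add_distrib, Pi.single_apply, ite_smul, one_smul, zero_smul,
      sum_ite_eq', if_pos hi₀]
    rw [← sub_eq_iff_eq_add, ← hly]
    rfl
  · simp [hl0 i₀ hi₀s]
  · exact add_mem (l i).2 (by rw [Pi.single_apply]; split_ifs <;> simp)

section Monomials

variable {A : Type*} [CommMonoid A] {m : ℕ} {x : ℕ → A}

def prodPow (m : ℕ) (x : ℕ → A) (K : ℕ → ℕ) : A := ∏ j ∈ Icc 1 m, x j ^ K j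

lemma prodPow_add (K L : ℕ → ℕ) : prodPow m x (K + L) = prodPow m x K * prodPow m x L := by
  simp [prodPow, pow_add, prod_mul_distrib]

lemma prodPow_single {i : ℕ} (hi : i ∈ Icc 1 m) (c : ℕ) :
    prodPow m x (Pi.single i c) = x i ^ c := by
  rw [prodPow, prod_eq_single_of_mem i hi fun j _ hj => by simp [hj], Pi.single_eq_same]

lemma prod_Icc_pred_eq_prodPow {i : ℕ} (hi : i ≤ m + 1) {ℓ : ℕ → ℕ} (hℓ : ∀ j, i ≤ j → ℓ j = 0) :
    ∏ j ∈ Icc 1 (i - 1), x j ^ ℓ j = prodPow m x ℓ :=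
  prod_subset (Icc_subset_Icc_right (by omega)) fun j hjm hj => by
    rw [hℓ j (by simp at hjm hj; omega), pow_zero]

end Monomials

lemma sub_single_add_single {K : ℕ → ℕ} {i c : ℕ} (h : c ≤ K i) :
    K - Pi.single i c + Pi.single i c = K :=
  tsub_add_cancel_of_le fun j => by by_cases hj : j = i <;> simp [hj, h]

section Reduction

variable {m : ℕ} {a : ℕ → ℕ}

variable (m a) in
/-- Reducing an exponent tuple with a relation `F_i` either lowers its weight, or keeps the weight
and lowers the tuple colexicographically. -/
def reductionKey (K : ℕ → ℕ) : ℕ ×ₗ Colex (Fin (m + 1) → ℕ) :=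
  toLex (weight m a K, toColex fun j => K j)

lemma reductionKey_lt_of_weight_lt {K L : ℕ → ℕ} (h : weight m a L < weight m a K) :
    reductionKey m a L < reductionKey m a K :=
  Prod.Lex.toLex_lt_toLex.2 (Or.inl h)

lemma reductionKey_reduce_lt {K ℓ : ℕ → ℕ} {i c : ℕ} (hi : i ∈ Icc 1 m) (hc : 1 ≤ c)
    (hcK : c ≤ K i) (hℓ : ∀ j, i ≤ j → ℓ j = 0) (hw : weight m a ℓ = a i * c) :
    reductionKey m a (K - Pi.single i c + ℓ) < reductionKey m a K := by
  refine Prod.Lex.toLex_lt_toLex.2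
    (Or.inr ⟨?_, ⟨i, Nat.lt_succ_of_le (mem_Icc.1 hi).2⟩, fun j hj => ?_, ?_⟩)
  · conv_rhs => rw [← sub_single_add_single hcK]
    rw [weight_add, weight_add, hw, weight_single a hi]
  · have hj : i < (j : ℕ) := hj
    simp [hℓ j hj.le, hj.ne']
  · simp [hℓ i le_rfl]
    omega

variable {𝕜 A : Type*} [CommRing 𝕜] [CommRing A] [Module 𝕜 A]

variable (m a) in
def spanBelow (R : Subring 𝕜) (x : ℕ → A) (w : ℕ) : Submodule R A :=
  Submodule.span R (prodPow m x '' {J | BAm m a J ∧ weight m a J < w})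

lemma spanBelow_mono (R : Subring 𝕜) (x : ℕ → A) {w w' : ℕ} (h : w ≤ w') :
    spanBelow m a R x w ≤ spanBelow m a R x w' :=
  Submodule.span_mono (Set.image_mono fun _ hJ => ⟨hJ.1, hJ.2.trans_le h⟩)

variable (m a) in
structure IsReductionSystem (R : Subring 𝕜) (x : ℕ → A) (ℓ : ℕ → ℕ → ℕ)
    (S : ℕ → Finset (ℕ → ℕ)) (lam : ℕ → (ℕ → ℕ) → 𝕜) : Prop where
  exponent_eq_zero : ∀ i, 2 ≤ i → i ≤ m → ∀ j, (j < 1 ∨ i ≤ j) → ℓ i j = 0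
  weight_exponent : ∀ i, 2 ≤ i → i ≤ m → weight m a (ℓ i) = a i * (dseq a (i - 1) / dseq a i)
  mem_tail : ∀ i, 2 ≤ i → i ≤ m → ∀ J ∈ S i,
    BAm m a J ∧ weight m a J < a i * (dseq a (i - 1) / dseq a i)
  coeff_mem : ∀ i, 2 ≤ i → i ≤ m → ∀ J ∈ S i, lam i J ∈ R
  relation : ∀ i, 2 ≤ i → i ≤ m → x i ^ (dseq a (i - 1) / dseq a i) =
    prodPow m x (ℓ i) + ∑ J ∈ S i, lam i J • prodPow m x J

variable [SMulCommClass 𝕜 A A]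

lemma prodPow_eq_of_relation {x : ℕ → A} {ℓ K : ℕ → ℕ} {S : Finset (ℕ → ℕ)} {lam : (ℕ → ℕ) → 𝕜}
    {i c : ℕ} (hi : i ∈ Icc 1 m) (hcK : c ≤ K i)
    (hrel : x i ^ c = prodPow m x ℓ + ∑ J ∈ S, lam J • prodPow m x J) :
    prodPow m x K = prodPow m x (K - Pi.single i c + ℓ) +
      ∑ J ∈ S, lam J • prodPow m x (K - Pi.single i c + J) := by
  conv_lhs => rw [← sub_single_add_single hcK]
  simp_rw [prodPow_add, prodPow_single hi, hrel, mul_add, mul_sum, mul_smul_comm]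

theorem IsReductionSystem.exists_sub_prodPow_mem_spanBelow {R : Subring 𝕜} {x : ℕ → A}
    {ℓ : ℕ → ℕ → ℕ} {S : ℕ → Finset (ℕ → ℕ)} {lam : ℕ → (ℕ → ℕ) → 𝕜}
    (h : IsReductionSystem m a R x ℓ S lam) (ha : 0 < a 1)
    (K : ℕ → ℕ) (hK : ∀ j, (j < 1 ∨ m < j) → K j = 0) :
    ∃ J, BAm m a J ∧ weight m a J = weight m a K ∧
      prodPow m x K - prodPow m x J ∈ spanBelow m a R x (weight m a K) := by
  induction K using (InvImage.wf (reductionKey m a) wellFounded_lt).induction with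
  | _ K ih =>
  by_cases hB : BAm m a K
  · exact ⟨K, hB, rfl, by simp⟩
  obtain ⟨i, hi2, him, hcK⟩ : ∃ i, 2 ≤ i ∧ i ≤ m ∧ dseq a (i - 1) / dseq a i ≤ K i := by
    by_contra! h
    exact hB ⟨hK, h⟩
  have hi1 : i ∈ Icc 1 m := mem_Icc.2 ⟨by omega, him⟩
  obtain ⟨c, hc⟩ : ∃ c, dseq a (i - 1) / dseq a i = c := ⟨_, rfl⟩
  have hℓ0 := h.exponent_eq_zero i hi2 him
  have hℓw := h.weight_exponent i hi2 him
  have hrel := h.relation i hi2 him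
  rw [hc] at hcK hℓw hrel
  have hexpand := prodPow_eq_of_relation hi1 hcK hrel
  set K' := K - Pi.single i c
  have hwK : weight m a K = weight m a K' + a i * c := by
    rw [← weight_single a hi1, ← weight_add, sub_single_add_single hcK]
  have hK'0 : ∀ j, (j < 1 ∨ m < j) → K' j = 0 := fun j hj => by simp [K', hK j hj]
  have hlower : ∀ L, (∀ j, (j < 1 ∨ m < j) → L j = 0) → weight m a L < weight m a K →
      prodPow m x L ∈ spanBelow m a R x (weight m a K) := by
    intro L hL hLw
    obtain ⟨J, hJB, hJw, hJ⟩ := ih L (reductionKey_lt_of_weight_lt hLw) hL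
    simpa using add_mem (spanBelow_mono R x hLw.le hJ)
      (Submodule.subset_span ⟨J, ⟨hJB, hJw ▸ hLw⟩, rfl⟩)
  obtain ⟨Jh, hJhB, hJhw, hJh⟩ := ih (K' + ℓ i)
    (reductionKey_reduce_lt hi1 (hc ▸ one_le_dseq_pred_div ha hi2) hcK
      (fun j hj => hℓ0 j (Or.inr hj)) hℓw)
    (fun j hj => by rw [Pi.add_apply, hK'0 j hj, hℓ0 j (by omega)])
  have hwh : weight m a (K' + ℓ i) = weight m a K := by rw [weight_add, hℓw, hwK]
  refine ⟨Jh, hJhB, hJhw.trans hwh, ?_⟩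
  rw [hexpand, add_sub_right_comm]
  refine add_mem (hwh ▸ hJh) (sum_mem fun J hJ => ?_)
  obtain ⟨hJB, hJw⟩ := h.mem_tail i hi2 him J hJ
  rw [hc] at hJw
  exact Submodule.smul_mem _ ⟨lam i J, h.coeff_mem i hi2 him J hJ⟩ (hlower (K' + J)
    (fun j hj => by rw [Pi.add_apply, hK'0 j hj, hJB.1 j hj]) (by rw [weight_add, hwK]; omega))

end Reduction

section LaurentSeries

variable {𝕜 : Type*} [Field 𝕜] {m : ℕ} {a : ℕ → ℕ} {x : ℕ → LaurentSeries 𝕜}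

lemma orderTop_prod_pow_eq {s : Finset ℕ} (hx : ∀ j ∈ s, (x j).orderTop = (-(a j : ℤ) : ℤ))
    (K : ℕ → ℕ) : (∏ j ∈ s, x j ^ K j).orderTop = (-(∑ j ∈ s, a j * K j : ℕ) : ℤ) := by
  rw [HahnSeries.orderTop_prod_pow,
    sum_congr rfl fun j hj => by rw [hx j hj, ← WithTop.coe_nsmul], ← WithTop.coe_sum,
    WithTop.coe_inj]
  simp [mul_comm]

lemma orderTop_prodPow (hx : ∀ j ∈ Icc 1 m, (x j).orderTop = (-(a j : ℤ) : ℤ)) (K : ℕ → ℕ) :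
    (prodPow m x K).orderTop = (-(weight m a K : ℤ) : ℤ) :=
  orderTop_prod_pow_eq hx K

theorem linearIndepOn_prodPow (ha : 0 < a 1)
    (hx : ∀ j ∈ Icc 1 m, (x j).orderTop = (-(a j : ℤ) : ℤ)) :
    LinearIndepOn 𝕜 (prodPow m x) {J | BAm m a J} :=
  HahnSeries.linearIndepOn_of_injOn_orderTop
    (fun J _ => HahnSeries.orderTop_ne_top.1 (by simp [orderTop_prodPow hx]))
    fun J hJ J' hJ' h => BAm.eq_of_weight_eq ha hJ hJ' (by simpa [orderTop_prodPow hx] using h)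

/-- In `x i ^ c = ∏_{j < i} x j ^ ℓ j + (terms of order > -a i * c)` the product has order
`-a i * c = -weight ℓ`, so the exponents `ℓ j` with `j ≥ i` must vanish. -/
theorem eq_zero_of_relation {i c : ℕ} {ℓ : ℕ → ℕ} {S : Finset (ℕ → ℕ)} {lam : (ℕ → ℕ) → 𝕜}
    (hx : ∀ j ∈ Icc 1 m, (x j).orderTop = (-(a j : ℤ) : ℤ)) (ha : ∀ j ∈ Icc 1 m, 0 < a j)
    (hi1 : 1 ≤ i) (him : i ≤ m) (hℓm : ∀ j, m < j → ℓ j = 0) (hℓw : weight m a ℓ = a i * c)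
    (hS : ∀ J ∈ S, weight m a J < a i * c)
    (hrel : x i ^ c = ∏ j ∈ Icc 1 (i - 1), x j ^ ℓ j + ∑ J ∈ S, lam J • prodPow m x J) :
    ∀ j, i ≤ j → ℓ j = 0 := by
  classical
  have hsub : Icc 1 (i - 1) ⊆ Icc 1 m := Icc_subset_Icc_right (by omega)
  have hpow : (x i ^ c).orderTop = (-(a i * c : ℕ) : ℤ) := by
    simpa using orderTop_prod_pow_eq (s := {i}) (by simpa using hx i (mem_Icc.2 ⟨hi1, him⟩))
      fun _ => c
  have htail : (x i ^ c).orderTop < (∑ J ∈ S, lam J • prodPow m x J).orderTop := by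
    rw [hpow, ← HahnSeries.addVal_apply]
    refine AddValuation.map_lt_sum _ WithTop.coe_ne_top fun J hJ => ?_
    rw [HahnSeries.addVal_apply]
    refine lt_of_lt_of_le ?_ (HahnSeries.orderTop_le_orderTop_smul _ _)
    rw [orderTop_prodPow hx, WithTop.coe_lt_coe]
    have := hS J hJ
    omega
  have hhead := congrArg HahnSeries.orderTop (eq_sub_of_add_eq hrel.symm)
  rw [HahnSeries.orderTop_sub htail, hpow, orderTop_prod_pow_eq fun j hj => hx j (hsub hj),
    WithTop.coe_inj, neg_inj, Nat.cast_inj, ← hℓw, weight, ← sum_sdiff hsub] at hhead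
  have hzero := sum_eq_zero_iff.1 (by omega : ∑ j ∈ Icc 1 m \ Icc 1 (i - 1), a j * ℓ j = 0)
  intro j hj
  by_cases hjm : j ≤ m
  · exact (mul_eq_zero.1 (hzero j (by simp; omega))).resolve_left (ha j (by simp; omega)).ne'
  · exact hℓm j (by omega)

theorem isReductionSystem_of_relations (ha : ∀ j ∈ Icc 1 m, 0 < a j)
    (hx : ∀ j ∈ Icc 1 m, (x j).orderTop = (-(a j : ℤ) : ℤ)) {ℓ : ℕ → ℕ → ℕ}
    {S : ℕ → Finset (ℕ → ℕ)} {lam : ℕ → (ℕ → ℕ) → 𝕜}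
    (hℓ : ∀ i, 2 ≤ i → i ≤ m →
      BAm m a (ℓ i) ∧ dseq a i * weight m a (ℓ i) = a i * dseq a (i - 1))
    (hS : ∀ i, 2 ≤ i → i ≤ m → ∀ J ∈ S i,
      BAm m a J ∧ dseq a i * weight m a J < a i * dseq a (i - 1))
    (hF : ∀ i, 2 ≤ i → i ≤ m → x i ^ (dseq a (i - 1) / dseq a i) =
      ∏ j ∈ Icc 1 (i - 1), x j ^ ℓ i j + ∑ J ∈ S i, lam i J • prodPow m x J) :
    IsReductionSystem m a (Subring.closure {z | ∃ i, 2 ≤ i ∧ i ≤ m ∧ ∃ J' ∈ S i, z = lam i J'})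
      x ℓ S lam := by
  have hw : ∀ i, 2 ≤ i → i ≤ m → weight m a (ℓ i) = a i * (dseq a (i - 1) / dseq a i) :=
    fun i hi2 him => Nat.eq_of_mul_eq_mul_left (dseq_pos (ha 1 (by simp; omega)) (by omega))
      ((hℓ i hi2 him).2.trans (mul_dseq_pred_eq (by omega)))
  have hSw : ∀ i, 2 ≤ i → i ≤ m → ∀ J ∈ S i,
      BAm m a J ∧ weight m a J < a i * (dseq a (i - 1) / dseq a i) := fun i hi2 him J hJ =>
    ⟨(hS i hi2 him J hJ).1, lt_of_mul_lt_mul_left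
      ((hS i hi2 him J hJ).2.trans_eq (mul_dseq_pred_eq (by omega))) (Nat.zero_le _)⟩
  have hℓ0 : ∀ i, 2 ≤ i → i ≤ m → ∀ j, (j < 1 ∨ i ≤ j) → ℓ i j = 0 := fun i hi2 him j hj =>
    have hB := (hℓ i hi2 him).1
    hj.elim (hB.1 j ∘ Or.inl) <| eq_zero_of_relation hx ha (by omega) him (hB.1 · ∘ Or.inr)
      (hw i hi2 him) (fun J hJ => (hSw i hi2 him J hJ).2) (hF i hi2 him) j
  refine ⟨hℓ0, hw, hSw, fun i hi2 him J hJ => Subring.subset_closure ⟨i, hi2, him, J, hJ, rfl⟩,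
    fun i hi2 him => ?_⟩
  rw [hF i hi2 him,
    prod_Icc_pred_eq_prodPow (m := m) (by omega) fun j hj => hℓ0 i hi2 him j (Or.inr hj)]

end LaurentSeries

theorem monomial_expansion_in_phi_basis_general (m : ℕ) (a : ℕ → ℕ) (hT : Telescopic m a)
    (ℓmat : ℕ → ℕ → ℕ)
    (hℓ : ∀ i, 2 ≤ i → i ≤ m → BAm m a (ℓmat i) ∧
      dseq a i * ∑ j ∈ Finset.Icc 1 m, a j * ℓmat i j = a i * dseq a (i - 1))
    (lam : ℕ → (ℕ → ℕ) → ℂ)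
    (S : ℕ → Finset (ℕ → ℕ))
    (hS : ∀ i, 2 ≤ i → i ≤ m → ∀ J : ℕ → ℕ, J ∈ S i ↔ (BAm m a J ∧
      dseq a i * ∑ k ∈ Finset.Icc 1 m, a k * J k < a i * dseq a (i - 1)))
    (x : ℕ → LaurentSeries ℂ)
    (hord : ∀ i, 1 ≤ i → i ≤ m → ∀ n : ℤ, n < -(a i : ℤ) → (x i).coeff n = 0)
    (hlead : ∀ i, 1 ≤ i → i ≤ m → (x i).coeff (-(a i : ℤ)) ≠ 0)
    (hF : ∀ i, 2 ≤ i → i ≤ m →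
      x i ^ (dseq a (i - 1) / dseq a i) =
        ∏ j ∈ Finset.Icc 1 (i - 1), x j ^ ℓmat i j +
          ∑ J ∈ S i, lam i J • ∏ j ∈ Finset.Icc 1 m, x j ^ J j)
    (k : ℕ → ℕ) (hk : ∀ j, (j < 1 ∨ m < j) → k j = 0)
    (N : ℕ) (hN : N = ∑ i ∈ Finset.Icc 1 m, a i * k i)
    (T : Finset (ℕ → ℕ))
    (hTmem : ∀ J : ℕ → ℕ, J ∈ T ↔ (BAm m a J ∧ ∑ i ∈ Finset.Icc 1 m, a i * J i ≤ N)) :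
    (∃! ρ : (ℕ → ℕ) → ℂ, (∀ J ∉ T, ρ J = 0) ∧
      ∏ j ∈ Finset.Icc 1 m, x j ^ k j =
        ∑ J ∈ T, ρ J • ∏ j ∈ Finset.Icc 1 m, x j ^ J j) ∧
    ∀ ρ : (ℕ → ℕ) → ℂ, ((∀ J ∉ T, ρ J = 0) ∧
      ∏ j ∈ Finset.Icc 1 m, x j ^ k j =
        ∑ J ∈ T, ρ J • ∏ j ∈ Finset.Icc 1 m, x j ^ J j) →
      (∀ J ∈ T, ∑ i ∈ Finset.Icc 1 m, a i * J i = N → ρ J = 1) ∧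
      ∀ J, ρ J ∈ Subring.closure {z : ℂ | ∃ i, 2 ≤ i ∧ i ≤ m ∧ ∃ J' ∈ S i, z = lam i J'} := by
  obtain ⟨hm, ha, -, -⟩ := hT
  have hpos : ∀ j ∈ Icc 1 m, 0 < a j := fun j hj => by
    have := ha j (mem_Icc.1 hj).1 (mem_Icc.1 hj).2
    omega
  have ha1 : 0 < a 1 := hpos 1 (mem_Icc.2 ⟨le_rfl, by omega⟩)
  have hx : ∀ j ∈ Icc 1 m, (x j).orderTop = (-(a j : ℤ) : ℤ) := fun j hj =>
    HahnSeries.orderTop_eq_of_coeff_ne_zero (hord j (mem_Icc.1 hj).1 (mem_Icc.1 hj).2)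
      (hlead j (mem_Icc.1 hj).1 (mem_Icc.1 hj).2)
  obtain ⟨J₀, hJ₀B, hJ₀w, hJ₀⟩ := (isReductionSystem_of_relations hpos hx hℓ
    (fun i hi2 him J => (hS i hi2 him J).1) hF).exists_sub_prodPow_mem_spanBelow ha1 k hk
  obtain ⟨ρ, hρT, hρsum, hρ1, hρR⟩ := exists_eq_sum_smul_of_sub_mem_span
    (fun J hJ => (hTmem J).2 ⟨hJ.1, hN ▸ hJ.2.le⟩) ((hTmem J₀).2 ⟨hJ₀B, hN ▸ hJ₀w.le⟩)
    (fun h => h.2.ne hJ₀w) hJ₀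
  have huniq : ∀ ρ' : (ℕ → ℕ) → ℂ, ((∀ J ∉ T, ρ' J = 0) ∧
      prodPow m x k = ∑ J ∈ T, ρ' J • prodPow m x J) → ρ' = ρ := fun ρ' h' =>
    ((linearIndepOn_prodPow ha1 hx).mono fun J hJ => ((hTmem J).1 hJ).1).eq_of_sum_smul_eq
      h'.1 hρT (h'.2.symm.trans hρsum)
  refine ⟨⟨ρ, ⟨hρT, hρsum⟩, huniq⟩, fun ρ' h' => ?_⟩
  obtain rfl := huniq ρ' h'
  refine ⟨fun J hJT hJN => ?_, hρR⟩
  rwa [BAm.eq_of_weight_eq ha1 ((hTmem J).1 hJT).1 hJ₀B (hJN.trans (hN.trans hJ₀w.symm))]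

/-- Under the hypotheses on the Laurent series `x 1, …, x m` (the arithmetic local
parameter setting), let `(k 1, …, k m)` be a tuple of non-negative integers and set
`N = Σ_{i=1}^m a i * k i`.  Let `T` be the finite set of all `J ∈ B(A_m)` with
`Σ_i a i * J i ≤ N`.  Then there exist unique complex numbers `ρ J` (`J ∈ T`,
encoded as a function vanishing outside `T`) such that
`x 1 ^ k 1 ⋯ x m ^ k m = Σ_{J ∈ T} ρ J • x 1 ^ J 1 ⋯ x m ^ J m`; moreover
`ρ J⋆ = 1` for the unique `J⋆ ∈ B(A_m)` with `Σ_i a i * J⋆ i = N`, and every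
`ρ J` belongs to `ℤ[λ]`. -/
theorem monomial_expansion_in_phi_basis (m : ℕ) (a : ℕ → ℕ) (hT : Telescopic m a)
    (ℓmat : ℕ → ℕ → ℕ)
    (hℓ : ∀ i, 2 ≤ i → i ≤ m → BAm m a (ℓmat i) ∧
      dseq a i * ∑ j ∈ Finset.Icc 1 m, a j * ℓmat i j = a i * dseq a (i - 1))
    (lam : ℕ → (ℕ → ℕ) → ℂ)
    (S : ℕ → Finset (ℕ → ℕ))
    (hS : ∀ i, 2 ≤ i → i ≤ m → ∀ J : ℕ → ℕ, J ∈ S i ↔ (BAm m a J ∧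
      dseq a i * ∑ k ∈ Finset.Icc 1 m, a k * J k < a i * dseq a (i - 1)))
    (b : ℕ → ℤ) (hb : ∑ j ∈ Finset.Icc 1 m, (a j : ℤ) * b j = -1)
    (x : ℕ → LaurentSeries ℂ)
    (hord : ∀ i, 1 ≤ i → i ≤ m → ∀ n : ℤ, n < -(a i : ℤ) → (x i).coeff n = 0)
    (hlead : ∀ i, 1 ≤ i → i ≤ m → (x i).coeff (-(a i : ℤ)) ≠ 0)
    (hF : ∀ i, 2 ≤ i → i ≤ m →
      x i ^ (dseq a (i - 1) / dseq a i) =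
        ∏ j ∈ Finset.Icc 1 (i - 1), x j ^ ℓmat i j +
          ∑ J ∈ S i, lam i J • ∏ j ∈ Finset.Icc 1 m, x j ^ J j)
    (ht : ∏ j ∈ Finset.Icc 1 m, x j ^ b j = HahnSeries.single (1 : ℤ) (1 : ℂ))
    (k : ℕ → ℕ) (hk : ∀ j, (j < 1 ∨ m < j) → k j = 0)
    (N : ℕ) (hN : N = ∑ i ∈ Finset.Icc 1 m, a i * k i)
    (T : Finset (ℕ → ℕ))
    (hTmem : ∀ J : ℕ → ℕ, J ∈ T ↔ (BAm m a J ∧ ∑ i ∈ Finset.Icc 1 m, a i * J i ≤ N)) :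
    (∃! ρ : (ℕ → ℕ) → ℂ, (∀ J ∉ T, ρ J = 0) ∧
      ∏ j ∈ Finset.Icc 1 m, x j ^ k j =
        ∑ J ∈ T, ρ J • ∏ j ∈ Finset.Icc 1 m, x j ^ J j) ∧
    ∀ ρ : (ℕ → ℕ) → ℂ, ((∀ J ∉ T, ρ J = 0) ∧
      ∏ j ∈ Finset.Icc 1 m, x j ^ k j =
        ∑ J ∈ T, ρ J • ∏ j ∈ Finset.Icc 1 m, x j ^ J j) →
      (∀ J ∈ T, ∑ i ∈ Finset.Icc 1 m, a i * J i = N → ρ J = 1) ∧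
      ∀ J, ρ J ∈ Subring.closure {z : ℂ | ∃ i, 2 ≤ i ∧ i ≤ m ∧ ∃ J' ∈ S i, z = lam i J'} :=
  monomial_expansion_in_phi_basis_general m a hT ℓmat hℓ lam S hS x hord hlead hF k hk N hN T hTmem
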